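/- Suppose S ⊆ ℝ^n and T ⊆ ℝ^m are compact sets with dim_F(S) < n and dim_F(T) < m. Then dim_F(S × T) = min{ dim_F(S), dim_F(T) }, where S × T ⊆ ℝ^{n+m}. -/

import Mathlib

open MeasureTheory Real Set

/-- The Fourier transform of a measure on `ℝ^n`:  `μ̂(ξ) = ∫ e^{−2πi x·ξ} dμ(x)`. -/
noncomputable def mft {n : ℕ} (μ : Measure (EuclideanSpace ℝ (Fin n)))
    (ξ : EuclideanSpace ℝ (Fin n)) : ℂ :=
  ∫ x, Complex.exp (((-2 * Real.pi * inner ℝ x ξ : ℝ) : ℂ) * Complex.I) ∂μ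

/-- The Fourier dimension of a set `A ⊆ ℝ^n`. -/
noncomputable def fourierDim {n : ℕ} (A : Set (EuclideanSpace ℝ (Fin n))) : ℝ :=
  sSup {s : ℝ | 0 ≤ s ∧ s ≤ (n : ℝ) ∧
    ∃ μ : Measure (EuclideanSpace ℝ (Fin n)), IsFiniteMeasure μ ∧ μ ≠ 0 ∧ μ Aᶜ = 0 ∧
      ∃ C : ℝ, ∀ ξ : EuclideanSpace ℝ (Fin n), ‖ξ‖ ^ (s / 2) * ‖mft μ ξ‖ ≤ C}

/-- The canonical identification of `ℝ^n × ℝ^m` with `ℝ^{n+m}`. -/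
noncomputable def prodMap (n m : ℕ)
    (p : EuclideanSpace ℝ (Fin n) × EuclideanSpace ℝ (Fin m)) :
    EuclideanSpace ℝ (Fin (n + m)) :=
  (EuclideanSpace.equiv (Fin (n + m)) ℝ).symm
    (Fin.append (EuclideanSpace.equiv (Fin n) ℝ p.1) (EuclideanSpace.equiv (Fin m) ℝ p.2))


/-!
Projecting a measure `ρ` on `S × T` to the first factor gives a measure on `S` with transform
`ξ ↦ ρ̂(ξ, 0)`, which decays at least as fast as `ρ̂`. The exponent of a measure on `S` is only
counted up to `n`, so this gives `min(u, n) ≤ dim_F S` for every admissible exponent `u` of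
`S × T`; the hypothesis `dim_F S < n` removes the truncation.

Conversely, `μ ⊗ ν` has transform `μ̂(ξ) ν̂(η)`. Since `|(ξ, η)|^r ≤ 2^r (|ξ|^r + |η|^r)` and
Fourier transforms of finite measures are bounded, it decays with exponent `min(s, t)` when `μ̂`
and `ν̂` decay with exponents `s` and `t`.
-/

open scoped InnerProductSpace

lemma Real.rpow_le_max_one_rpow {x a b : ℝ} (hx : 0 ≤ x) (ha : 0 ≤ a) (hab : a ≤ b) :
    x ^ a ≤ max 1 (x ^ b) := by
  rcases le_total x 1 with hx1 | hx1
  · exact (Real.rpow_le_one hx hx1 ha).trans (le_max_left _ _)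
  · exact (Real.rpow_le_rpow_of_exponent_le hx1 hab).trans (le_max_right _ _)

lemma Real.add_rpow_le_two_rpow_mul_rpow_add_rpow {a b p : ℝ} (ha : 0 ≤ a) (hb : 0 ≤ b)
    (hp : 0 ≤ p) : (a + b) ^ p ≤ 2 ^ p * (a ^ p + b ^ p) := calc
  (a + b) ^ p ≤ (2 * max a b) ^ p := by
    rw [two_mul]; gcongr <;> simp
  _ = 2 ^ p * max a b ^ p := Real.mul_rpow zero_le_two (le_max_of_le_left ha)
  _ = 2 ^ p * max (a ^ p) (b ^ p) := by rw [Real.rpow_max ha hb hp]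
  _ ≤ 2 ^ p * (a ^ p + b ^ p) := by
    gcongr; exact max_le_add_of_nonneg (by positivity) (by positivity)

lemma min_sSup_le_sSup_of_forall_min_mem {X Y Z : Set ℝ} (hZ : BddAbove Z) (hZ₀ : 0 ≤ sSup Z)
    (h : ∀ s ∈ X, ∀ t ∈ Y, min s t ∈ Z) : min (sSup X) (sSup Y) ≤ sSup Z := by
  rcases X.eq_empty_or_nonempty with rfl | hX
  · exact (min_le_left _ _).trans (by simpa using hZ₀)
  rcases Y.eq_empty_or_nonempty with rfl | hY
  · exact (min_le_right _ _).trans (by simpa using hZ₀)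
  refine le_of_forall_lt fun c hc => ?_
  obtain ⟨s, hs, hcs⟩ := exists_lt_of_lt_csSup hX (lt_min_iff.mp hc).1
  obtain ⟨t, ht, hct⟩ := exists_lt_of_lt_csSup hY (lt_min_iff.mp hc).2
  exact (lt_min hcs hct).trans_le (le_csSup hZ (h s hs t ht))

section prodMap

variable {n m : ℕ}

lemma prodMap_eq_finAddEquivProd_symm :
    prodMap n m = (EuclideanSpace.finAddEquivProd (𝕜 := ℝ)).symm := by
  funext p
  ext k
  refine Fin.addCases (fun i => ?_) (fun j => ?_) k <;> simp [prodMap, EuclideanSpace.equiv]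

lemma continuous_prodMap : Continuous (prodMap n m) := by
  rw [prodMap_eq_finAddEquivProd_symm]
  exact ContinuousLinearEquiv.continuous _

lemma prodMap_surjective : Function.Surjective (prodMap n m) := by
  rw [prodMap_eq_finAddEquivProd_symm]
  exact ContinuousLinearEquiv.surjective _

lemma map_prodMap_compl_image (ρ : Measure (EuclideanSpace ℝ (Fin n) × EuclideanSpace ℝ (Fin m)))
    (X : Set (EuclideanSpace ℝ (Fin n) × EuclideanSpace ℝ (Fin m))) :
    ρ.map (prodMap n m) (prodMap n m '' X)ᶜ = ρ Xᶜ := by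
  let e := (EuclideanSpace.finAddEquivProd (𝕜 := ℝ) (n := n) (m := m)).symm.toHomeomorph
  have he : ⇑e.toMeasurableEquiv = prodMap n m := by simp [e, prodMap_eq_finAddEquivProd_symm]
  rw [← he, MeasurableEquiv.map_apply, preimage_compl, e.toMeasurableEquiv.injective.preimage_image]

lemma inner_prodMap (p q : EuclideanSpace ℝ (Fin n) × EuclideanSpace ℝ (Fin m)) :
    ⟪prodMap n m p, prodMap n m q⟫_ℝ = ⟪p.1, q.1⟫_ℝ + ⟪p.2, q.2⟫_ℝ := by
  simp [prodMap_eq_finAddEquivProd_symm]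

lemma norm_prodMap_sq (p : EuclideanSpace ℝ (Fin n) × EuclideanSpace ℝ (Fin m)) :
    ‖prodMap n m p‖ ^ 2 = ‖p.1‖ ^ 2 + ‖p.2‖ ^ 2 := by
  simp only [← real_inner_self_eq_norm_sq, inner_prodMap]

lemma norm_prodMap_le (p : EuclideanSpace ℝ (Fin n) × EuclideanSpace ℝ (Fin m)) :
    ‖prodMap n m p‖ ≤ ‖p.1‖ + ‖p.2‖ := by
  have := norm_prodMap_sq p
  nlinarith [norm_nonneg p.1, norm_nonneg p.2, norm_nonneg (prodMap n m p)]

lemma norm_prodMap_mk_zero (ξ : EuclideanSpace ℝ (Fin n)) :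
    ‖prodMap n m (ξ, 0)‖ = ‖ξ‖ := by
  simpa using norm_prodMap_sq (n := n) (m := m) (ξ, 0)

lemma norm_prodMap_zero_mk (η : EuclideanSpace ℝ (Fin m)) :
    ‖prodMap n m (0, η)‖ = ‖η‖ := by
  simpa using norm_prodMap_sq (n := n) (m := m) (0, η)

end prodMap

section FourierTransform

variable {n N : ℕ}

lemma continuous_mft_integrand (ξ : EuclideanSpace ℝ (Fin n)) :
    Continuous fun x : EuclideanSpace ℝ (Fin n) =>
      Complex.exp (((-2 * π * ⟪x, ξ⟫_ℝ : ℝ) : ℂ) * Complex.I) := by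
  fun_prop

lemma norm_mft_le (μ : Measure (EuclideanSpace ℝ (Fin n))) [IsFiniteMeasure μ]
    (ξ : EuclideanSpace ℝ (Fin n)) : ‖mft μ ξ‖ ≤ μ.real univ := by
  refine (norm_integral_le_of_norm_le_const (C := 1)
    (Filter.Eventually.of_forall fun x => ?_)).trans_eq (one_mul _)
  exact (Complex.norm_exp_ofReal_mul_I _).le

lemma mft_map {A : EuclideanSpace ℝ (Fin N) → EuclideanSpace ℝ (Fin n)} (hA : Measurable A)
    {B : EuclideanSpace ℝ (Fin n) → EuclideanSpace ℝ (Fin N)}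
    (hAB : ∀ z ξ, ⟪A z, ξ⟫_ℝ = ⟪z, B ξ⟫_ℝ) (ρ : Measure (EuclideanSpace ℝ (Fin N)))
    (ξ : EuclideanSpace ℝ (Fin n)) : mft (ρ.map A) ξ = mft ρ (B ξ) := by
  simp only [mft, integral_map hA.aemeasurable (continuous_mft_integrand ξ).aestronglyMeasurable,
    hAB]

lemma mft_map_prodMap {m : ℕ} (μ : Measure (EuclideanSpace ℝ (Fin n)))
    (ν : Measure (EuclideanSpace ℝ (Fin m))) [SFinite μ] [SFinite ν]
    (ξ : EuclideanSpace ℝ (Fin n)) (η : EuclideanSpace ℝ (Fin m)) :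
    mft ((μ.prod ν).map (prodMap n m)) (prodMap n m (ξ, η)) = mft μ ξ * mft ν η := by
  rw [mft, integral_map continuous_prodMap.aemeasurable
    (continuous_mft_integrand _).aestronglyMeasurable]
  simp only [inner_prodMap, mul_add, Complex.ofReal_add, add_mul, Complex.exp_add]
  exact integral_prod_mul (L := ℂ)
    (fun x => Complex.exp (((-2 * π * ⟪x, ξ⟫_ℝ : ℝ) : ℂ) * Complex.I))
    (fun y => Complex.exp (((-2 * π * ⟪y, η⟫_ℝ : ℝ) : ℂ) * Complex.I))

end FourierTransform

def HasFourierDecay {n : ℕ} (μ : Measure (EuclideanSpace ℝ (Fin n))) (s : ℝ) : Prop :=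
  ∃ C : ℝ, ∀ ξ : EuclideanSpace ℝ (Fin n), ‖ξ‖ ^ (s / 2) * ‖mft μ ξ‖ ≤ C

namespace HasFourierDecay

variable {n N : ℕ} {s t u : ℝ}

lemma mono {μ : Measure (EuclideanSpace ℝ (Fin n))} [IsFiniteMeasure μ] (h : HasFourierDecay μ s)
    (hu : 0 ≤ u) (hus : u ≤ s) : HasFourierDecay μ u := by
  obtain ⟨C, hC⟩ := h
  refine ⟨max (μ.real univ) C, fun ξ => ?_⟩
  calc ‖ξ‖ ^ (u / 2) * ‖mft μ ξ‖ ≤ max 1 (‖ξ‖ ^ (s / 2)) * ‖mft μ ξ‖ := by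
        gcongr
        exact Real.rpow_le_max_one_rpow (norm_nonneg _) (by linarith) (by linarith)
    _ = max ‖mft μ ξ‖ (‖ξ‖ ^ (s / 2) * ‖mft μ ξ‖) := by
        rw [max_mul_of_nonneg _ _ (norm_nonneg _), one_mul]
    _ ≤ max (μ.real univ) C := max_le_max (norm_mft_le μ ξ) (hC ξ)

lemma map {ρ : Measure (EuclideanSpace ℝ (Fin N))} (h : HasFourierDecay ρ s)
    {A : EuclideanSpace ℝ (Fin N) → EuclideanSpace ℝ (Fin n)} (hA : Measurable A)
    {B : EuclideanSpace ℝ (Fin n) → EuclideanSpace ℝ (Fin N)}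
    (hAB : ∀ z ξ, ⟪A z, ξ⟫_ℝ = ⟪z, B ξ⟫_ℝ) (hB : ∀ ξ, ‖B ξ‖ = ‖ξ‖) :
    HasFourierDecay (ρ.map A) s := by
  obtain ⟨C, hC⟩ := h
  exact ⟨C, fun ξ => by simpa only [mft_map hA hAB, hB] using hC (B ξ)⟩

lemma prod {m : ℕ} {μ : Measure (EuclideanSpace ℝ (Fin n))}
    {ν : Measure (EuclideanSpace ℝ (Fin m))} [IsFiniteMeasure μ] [IsFiniteMeasure ν]
    (hμ : HasFourierDecay μ s) (hν : HasFourierDecay ν t) (hs : 0 ≤ s) (ht : 0 ≤ t) :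
    HasFourierDecay ((μ.prod ν).map (prodMap n m)) (min s t) := by
  set u := min s t
  have hu : 0 ≤ u := le_min hs ht
  obtain ⟨Cμ, hCμ⟩ := hμ.mono hu (min_le_left s t)
  obtain ⟨Cν, hCν⟩ := hν.mono hu (min_le_right s t)
  refine ⟨2 ^ (u / 2) * (Cμ * ν.real univ + Cν * μ.real univ), fun ζ => ?_⟩
  obtain ⟨⟨ξ, η⟩, rfl⟩ := prodMap_surjective ζ
  rw [mft_map_prodMap, norm_mul]
  have hζ : ‖prodMap n m (ξ, η)‖ ^ (u / 2) ≤ 2 ^ (u / 2) * (‖ξ‖ ^ (u / 2) + ‖η‖ ^ (u / 2)) :=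
    (Real.rpow_le_rpow (norm_nonneg _) (norm_prodMap_le _) (by linarith)).trans
      (Real.add_rpow_le_two_rpow_mul_rpow_add_rpow (norm_nonneg _) (norm_nonneg _) (by linarith))
  have hξ := hCμ ξ
  have hη := hCν η
  have hμb := norm_mft_le μ ξ
  have hνb := norm_mft_le ν η
  calc ‖prodMap n m (ξ, η)‖ ^ (u / 2) * (‖mft μ ξ‖ * ‖mft ν η‖)
      ≤ 2 ^ (u / 2) * (‖ξ‖ ^ (u / 2) + ‖η‖ ^ (u / 2)) * (‖mft μ ξ‖ * ‖mft ν η‖) := by gcongr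
    _ = 2 ^ (u / 2) * ((‖ξ‖ ^ (u / 2) * ‖mft μ ξ‖) * ‖mft ν η‖
          + (‖η‖ ^ (u / 2) * ‖mft ν η‖) * ‖mft μ ξ‖) := by ring
    _ ≤ 2 ^ (u / 2) * (Cμ * ν.real univ + Cν * μ.real univ) := by
        gcongr
        · exact le_trans (by positivity) hξ
        · exact le_trans (by positivity) hη

end HasFourierDecay

/-- `fourierDim A` is, by definition, the supremum of this set. -/
def fourierDimSet {n : ℕ} (A : Set (EuclideanSpace ℝ (Fin n))) : Set ℝ :=
  {s : ℝ | 0 ≤ s ∧ s ≤ (n : ℝ) ∧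
    ∃ μ : Measure (EuclideanSpace ℝ (Fin n)), IsFiniteMeasure μ ∧ μ ≠ 0 ∧ μ Aᶜ = 0 ∧
      HasFourierDecay μ s}

section fourierDimSet

variable {n m N : ℕ}

lemma bddAbove_fourierDimSet (A : Set (EuclideanSpace ℝ (Fin n))) :
    BddAbove (fourierDimSet A) :=
  ⟨n, fun _ hs => hs.2.1⟩

lemma fourierDim_nonneg (A : Set (EuclideanSpace ℝ (Fin n))) : 0 ≤ fourierDim A :=
  Real.sSup_nonneg fun _ hs => hs.1

lemma le_fourierDim_of_min_mem {A : Set (EuclideanSpace ℝ (Fin n))} {u : ℝ}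
    (hu : min u n ∈ fourierDimSet A) (hA : fourierDim A < n) : u ≤ fourierDim A :=
  (min_le_iff.mp (le_csSup (bddAbove_fourierDimSet A) hu)).resolve_right hA.not_ge

lemma min_mem_fourierDimSet_of_mapsTo {P : Set (EuclideanSpace ℝ (Fin N))}
    {S : Set (EuclideanSpace ℝ (Fin n))} (hS : MeasurableSet S)
    {A : EuclideanSpace ℝ (Fin N) → EuclideanSpace ℝ (Fin n)} (hA : Measurable A)
    {B : EuclideanSpace ℝ (Fin n) → EuclideanSpace ℝ (Fin N)}
    (hAB : ∀ z ξ, ⟪A z, ξ⟫_ℝ = ⟪z, B ξ⟫_ℝ) (hB : ∀ ξ, ‖B ξ‖ = ‖ξ‖) (hPS : MapsTo A P S)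
    {u : ℝ} (hu : u ∈ fourierDimSet P) : min u n ∈ fourierDimSet S := by
  obtain ⟨hu₀, -, ρ, _, hρ, hρP, hdecay⟩ := hu
  have hmin₀ : 0 ≤ min u n := le_min hu₀ n.cast_nonneg
  refine ⟨hmin₀, min_le_right _ _, ρ.map A, inferInstance, ?_, ?_,
    (hdecay.map hA hAB hB).mono hmin₀ (min_le_left _ _)⟩
  · rwa [Ne, Measure.map_eq_zero_iff hA.aemeasurable]
  · rw [Measure.map_apply hA hS.compl]
    exact measure_mono_null (fun z hz hzP => hz (hPS hzP)) hρP

lemma min_mem_fourierDimSet_left {S : Set (EuclideanSpace ℝ (Fin n))}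
    {T : Set (EuclideanSpace ℝ (Fin m))} (hS : MeasurableSet S) {u : ℝ}
    (hu : u ∈ fourierDimSet (prodMap n m '' S ×ˢ T)) : min u n ∈ fourierDimSet S := by
  let L := EuclideanSpace.finAddEquivProd (𝕜 := ℝ) (n := n) (m := m)
  have hL : ∀ p, L (prodMap n m p) = p := by simp [L, prodMap_eq_finAddEquivProd_symm]
  refine min_mem_fourierDimSet_of_mapsTo hS (L.continuous.fst).measurable
    (B := fun ξ => prodMap n m (ξ, 0)) (fun z ξ => ?_) norm_prodMap_mk_zero ?_ hu
  · obtain ⟨p, rfl⟩ := prodMap_surjective z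
    simp [hL, inner_prodMap]
  · rintro _ ⟨p, hp, rfl⟩
    simpa [hL] using hp.1

lemma min_mem_fourierDimSet_right {S : Set (EuclideanSpace ℝ (Fin n))}
    {T : Set (EuclideanSpace ℝ (Fin m))} (hT : MeasurableSet T) {u : ℝ}
    (hu : u ∈ fourierDimSet (prodMap n m '' S ×ˢ T)) : min u m ∈ fourierDimSet T := by
  let L := EuclideanSpace.finAddEquivProd (𝕜 := ℝ) (n := n) (m := m)
  have hL : ∀ p, L (prodMap n m p) = p := by simp [L, prodMap_eq_finAddEquivProd_symm]
  refine min_mem_fourierDimSet_of_mapsTo hT (L.continuous.snd).measurable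
    (B := fun η => prodMap n m (0, η)) (fun z η => ?_) norm_prodMap_zero_mk ?_ hu
  · obtain ⟨p, rfl⟩ := prodMap_surjective z
    simp [hL, inner_prodMap]
  · rintro _ ⟨p, hp, rfl⟩
    simpa [hL] using hp.2

lemma min_mem_fourierDimSet_prodMap {S : Set (EuclideanSpace ℝ (Fin n))}
    {T : Set (EuclideanSpace ℝ (Fin m))} {s t : ℝ} (hs : s ∈ fourierDimSet S)
    (ht : t ∈ fourierDimSet T) : min s t ∈ fourierDimSet (prodMap n m '' S ×ˢ T) := by
  obtain ⟨hs₀, hsn, μ, _, hμ, hμS, hμdecay⟩ := hs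
  obtain ⟨ht₀, -, ν, _, hν, hνT, hνdecay⟩ := ht
  refine ⟨le_min hs₀ ht₀, ?_, (μ.prod ν).map (prodMap n m), inferInstance, ?_, ?_,
    hμdecay.prod hνdecay hs₀ ht₀⟩
  · exact (min_le_left s t).trans (hsn.trans (by simp))
  · rw [Ne, Measure.map_eq_zero_iff continuous_prodMap.aemeasurable, ← Measure.measure_univ_eq_zero,
      ← univ_prod_univ, Measure.prod_prod, mul_eq_zero, Measure.measure_univ_eq_zero,
      Measure.measure_univ_eq_zero]
    exact not_or_intro hμ hν
  · rw [map_prodMap_compl_image, compl_prod_eq_union]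
    exact measure_union_null (by simp [Measure.prod_prod, hμS]) (by simp [Measure.prod_prod, hνT])

end fourierDimSet

/-- For compact `S ⊆ ℝ^n`, `T ⊆ ℝ^m` with `dim_F S < n` and `dim_F T < m`,
`dim_F(S × T) = min(dim_F S, dim_F T)`. -/
theorem statement12 (n m : ℕ)
    (S : Set (EuclideanSpace ℝ (Fin n))) (T : Set (EuclideanSpace ℝ (Fin m)))
    (hS : IsCompact S) (hT : IsCompact T)
    (hSd : fourierDim S < (n : ℝ)) (hTd : fourierDim T < (m : ℝ)) :
    fourierDim (prodMap n m '' (S ×ˢ T)) = min (fourierDim S) (fourierDim T) := by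
  refine le_antisymm (Real.sSup_le (fun u hu => le_min ?_ ?_)
    (le_min (fourierDim_nonneg S) (fourierDim_nonneg T))) ?_
  · exact le_fourierDim_of_min_mem (min_mem_fourierDimSet_left hS.isClosed.measurableSet hu) hSd
  · exact le_fourierDim_of_min_mem (min_mem_fourierDimSet_right hT.isClosed.measurableSet hu) hTd
  · exact min_sSup_le_sSup_of_forall_min_mem (bddAbove_fourierDimSet _) (fourierDim_nonneg _)
      fun s hs t ht => min_mem_fourierDimSet_prodMap hs ht
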